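/- arXiv:2002.11807 — 2 statements merged into one kernel-verified Lean document; each statement's English description precedes it below -/
import Mathlib

section
/- Let g, π ∈ ℝ^n with g ≠ 0, and let k_p > k_c > 0. Define α = (k_p - k_c)‖g‖² / (k_p‖g‖² + |⟨g, π⟩|) and b = -k_p g. Then α ∈ [0, 1) and ⟨g, α·π + (1-α)·b⟩ ≤ -k_c ‖g‖². -/
/-! Since `α ≥ 0` and `⟪g, π⟫ ≤ |⟪g, π⟫|`, the derivative `⟪g, α π + (1 - α) b⟫` is at most
`α (k_p ‖g‖² + |⟪g, π⟫|) - k_p ‖g‖²`, and the gain `α` is chosen exactly so that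
`α (k_p ‖g‖² + |⟪g, π⟫|) = (k_p - k_c) ‖g‖²`. -/

open RealInnerProductSpace

section AdaptiveGain

variable {k_p k_c N s : ℝ}

lemma adaptiveGain_mem_Ico (hkc : 0 < k_c) (hkp : k_c < k_p) (hN : 0 ≤ N) (hs : 0 ≤ s) :
    (k_p - k_c) * N / (k_p * N + s) ∈ Set.Ico 0 1 := by
  have hnum : 0 ≤ (k_p - k_c) * N := mul_nonneg (by linarith) hN
  have hden : 0 ≤ k_p * N + s := by nlinarith
  refine ⟨div_nonneg hnum hden, ?_⟩
  rcases hden.eq_or_lt with hzero | hpos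
  · simp [← hzero]
  · rw [div_lt_one hpos]
    rcases hN.eq_or_lt with rfl | hN
    · simpa using hpos
    · nlinarith

lemma adaptiveGain_mul_denom (hkc : 0 < k_c) (hkp : k_c < k_p) (hN : 0 ≤ N) (hs : 0 ≤ s) :
    (k_p - k_c) * N / (k_p * N + s) * (k_p * N + s) = (k_p - k_c) * N := by
  rcases eq_or_ne (k_p * N + s) 0 with hzero | hne
  · -- a vanishing denominator forces `N = 0`
    have : N = 0 := by nlinarith
    simp [this]
  · exact div_mul_cancel₀ _ hne

end AdaptiveGain

lemma inner_blend_safeControl_le {E : Type*} [NormedAddCommGroup E] [InnerProductSpace ℝ E]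
    (g π : E) (k_p α : ℝ) (hα : 0 ≤ α) :
    ⟪g, α • π + (1 - α) • -(k_p • g)⟫ ≤ α * (k_p * ‖g‖ ^ 2 + |⟪g, π⟫|) - k_p * ‖g‖ ^ 2 := by
  have hexpand : ⟪g, α • π + (1 - α) • -(k_p • g)⟫ = α * ⟪g, π⟫ - (1 - α) * (k_p * ‖g‖ ^ 2) := by
    rw [inner_add_right, inner_smul_right, inner_smul_right, inner_neg_right, inner_smul_right,
      real_inner_self_eq_norm_sq]
    ring
  rw [hexpand]
  nlinarith [mul_le_mul_of_nonneg_left (le_abs_self ⟪g, π⟫) hα]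

theorem stmt_3_general (n : ℕ) (g π : EuclideanSpace ℝ (Fin n))
    (k_p k_c : ℝ) (hkc : 0 < k_c) (hkp : k_c < k_p)
    (α : ℝ) (hα : α = (k_p - k_c) * ‖g‖ ^ 2 / (k_p * ‖g‖ ^ 2 + |inner ℝ g π|))
    (b : EuclideanSpace ℝ (Fin n)) (hb : b = -(k_p • g)) :
    α ∈ Set.Ico (0:ℝ) 1 ∧
    (inner ℝ g (α • π + (1 - α) • b) : ℝ) ≤ -k_c * ‖g‖ ^ 2 := by
  subst hα hb
  have hN : 0 ≤ ‖g‖ ^ 2 := sq_nonneg _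
  have hs : 0 ≤ |⟪g, π⟫| := abs_nonneg _
  have hgain := adaptiveGain_mem_Ico hkc hkp hN hs
  refine ⟨hgain, ?_⟩
  calc _ ≤ _ := inner_blend_safeControl_le g π k_p _ hgain.1
    _ = -k_c * ‖g‖ ^ 2 := by rw [adaptiveGain_mul_denom hkc hkp hN hs]; ring

theorem stmt_3 (n : ℕ) (g π : EuclideanSpace ℝ (Fin n)) (hg : g ≠ 0)
    (k_p k_c : ℝ) (hkc : 0 < k_c) (hkp : k_c < k_p)
    (α : ℝ) (hα : α = (k_p - k_c) * ‖g‖ ^ 2 / (k_p * ‖g‖ ^ 2 + |inner ℝ g π|))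
    (b : EuclideanSpace ℝ (Fin n)) (hb : b = -(k_p • g)) :
    α ∈ Set.Ico (0:ℝ) 1 ∧
    (inner ℝ g (α • π + (1 - α) • b) : ℝ) ≤ -k_c * ‖g‖ ^ 2 :=
  stmt_3_general n g π k_p k_c hkc hkp α hα b hb
end

section
/- A function f : X^l → ℝ (X a countable set) invariant under all permutations of its l arguments admits a representation f(x₁,…,x_l) = ρ(∑_{m=1}^l φ(x_m)) for some functions φ : X → ℝ^{l+1} and ρ : ℝ^{l+1} → ℝ. -/
/-!
Encode `X` injectively into `ℕ` by `c` and let every coordinate of `φ a` be `(l + 1) ^ c a`.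
The sum `∑ m, (l + 1) ^ c (x m)` is then the base-`(l + 1)` numeral whose `k`-th digit counts
the `m` with `c (x m) = k`; no digit reaches `l + 1`, so the sum determines the multiset of the
values of `x`, hence `x` up to a permutation, hence `f x`. So `f` factors through the sum and
`ρ` is the extension of `f` along it.
-/

open Finset

theorem Nat.ofDigits_map_range (b N : ℕ) (f : ℕ → ℕ) :
    Nat.ofDigits b ((List.range N).map f) = ∑ k ∈ range N, f k * b ^ k := by
  induction N with
  | zero => simp
  | succ N ih =>
    rw [List.range_succ, List.map_append, Nat.ofDigits_append, ih, sum_range_succ]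
    simp [Nat.ofDigits_singleton, mul_comm]

theorem Nat.eq_of_sum_range_mul_pow_eq {b N : ℕ} (hb : 1 < b) {f g : ℕ → ℕ}
    (hf : ∀ k, f k < b) (hg : ∀ k, g k < b)
    (h : ∑ k ∈ range N, f k * b ^ k = ∑ k ∈ range N, g k * b ^ k) {k : ℕ} (hk : k < N) :
    f k = g k := by
  rw [← Nat.ofDigits_map_range, ← Nat.ofDigits_map_range] at h
  have := Nat.ofDigits_inj_of_len_eq hb (by simp) (by simp [hf]) (by simp [hg]) h
  simpa [hk] using congrArg (·[k]?) this

theorem Multiset.sum_map_pow_eq_sum_range_count {b N : ℕ} {s : Multiset ℕ}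
    (hs : ∀ a ∈ s, a < N) :
    (s.map (b ^ ·)).sum = ∑ k ∈ Finset.range N, s.count k * b ^ k := by
  rw [Finset.sum_multiset_map_count]
  refine Finset.sum_subset (fun a ha => mem_range.2 (hs a (Multiset.mem_toFinset.1 ha))) ?_
  intro k _ hk
  simp [Multiset.count_eq_zero.2 (by simpa using hk)]

theorem Multiset.eq_of_sum_map_pow_eq {b : ℕ} {s t : Multiset ℕ}
    (hs : Multiset.card s < b) (ht : Multiset.card t < b)
    (h : (s.map (b ^ ·)).sum = (t.map (b ^ ·)).sum) : s = t := by
  rcases Nat.lt_or_ge 1 b with hb | hb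
  swap
  · rw [Multiset.card_eq_zero.1 (show Multiset.card s = 0 by omega),
      Multiset.card_eq_zero.1 (show Multiset.card t = 0 by omega)]
  set N := (s.map (b ^ ·)).sum + 1
  have lt_N : ∀ u : Multiset ℕ, (u.map (b ^ ·)).sum = (s.map (b ^ ·)).sum → ∀ a ∈ u, a < N :=
    fun u hu a ha => Nat.lt_succ_of_le <| hu ▸ (Nat.lt_pow_self hb).le.trans
      (Multiset.le_sum_of_mem (Multiset.mem_map_of_mem _ ha))
  have hsN := lt_N s rfl
  have htN := lt_N t h.symm
  rw [Multiset.sum_map_pow_eq_sum_range_count hsN, Multiset.sum_map_pow_eq_sum_range_count htN] at h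
  ext k
  by_cases hk : k < N
  · exact Nat.eq_of_sum_range_mul_pow_eq hb (fun k => (Multiset.count_le_card k s).trans_lt hs)
      (fun k => (Multiset.count_le_card k t).trans_lt ht) h hk
  · rw [Multiset.count_eq_zero.2 (fun h => hk (hsN k h)),
      Multiset.count_eq_zero.2 (fun h => hk (htN k h))]

theorem exists_perm_comp_eq_of_map_univ_eq {ι α : Type*} [Fintype ι] [DecidableEq α]
    {x y : ι → α} (h : univ.val.map x = univ.val.map y) : ∃ σ : Equiv.Perm ι, x ∘ σ = y := by
  have card_fiber : ∀ a, Fintype.card {i // y i = a} = Fintype.card {i // x i = a} := by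
    intro a
    have := congrArg (Multiset.count a) h
    simp only [Multiset.count_map, Fintype.card_subtype] at this ⊢
    simp only [eq_comm (a := a)] at this
    exact this.symm
  refine ⟨Equiv.ofFiberEquiv fun a => Fintype.equivOfCardEq (card_fiber a), ?_⟩
  funext i
  exact Equiv.ofFiberEquiv_map _ i

theorem exists_perm_comp_eq_of_sum_pow_eq {ι X : Type*} [Fintype ι] {c : X → ℕ}
    (hc : Function.Injective c) {b : ℕ} (hb : Fintype.card ι < b) {x y : ι → X}
    (h : ∑ i, b ^ c (x i) = ∑ i, b ^ c (y i)) : ∃ σ : Equiv.Perm ι, x ∘ σ = y := by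
  classical
  have hcode : univ.val.map (c ∘ x) = univ.val.map (c ∘ y) :=
    Multiset.eq_of_sum_map_pow_eq (by simpa using hb) (by simpa using hb)
      (by rw [Multiset.map_map, Multiset.map_map]; exact h)
  rw [← Multiset.map_map, ← Multiset.map_map] at hcode
  exact exists_perm_comp_eq_of_map_univ_eq (Multiset.map_injective hc hcode)

theorem stmt_12 {X : Type*} [Countable X] (l : ℕ)
    (f : (Fin l → X) → ℝ)
    (hf : ∀ σ : Equiv.Perm (Fin l), ∀ x : Fin l → X, f (x ∘ σ) = f x) :
    ∃ (φ : X → (Fin (l + 1) → ℝ)) (ρ : (Fin (l + 1) → ℝ) → ℝ),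
      ∀ x : Fin l → X, f x = ρ (∑ m : Fin l, φ (x m)) := by
  obtain ⟨c, hc⟩ := Countable.exists_injective_nat X
  let φ : X → Fin (l + 1) → ℝ := fun a _ => ((l + 1) ^ c a : ℕ)
  let encode : (Fin l → X) → Fin (l + 1) → ℝ := fun x => ∑ m, φ (x m)
  have hfactor : f.FactorsThrough encode := by
    intro x y hxy
    have hsum : ∑ m, (l + 1) ^ c (x m) = ∑ m, (l + 1) ^ c (y m) := by
      have := congrFun hxy 0
      simp only [encode, φ, Finset.sum_apply] at this
      exact_mod_cast this
    obtain ⟨σ, rfl⟩ := exists_perm_comp_eq_of_sum_pow_eq hc (by simp) hsum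
    exact (hf σ x).symm
  exact ⟨φ, Function.extend encode f 0, fun x => (hfactor.extend_apply 0 x).symm⟩
end
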